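/- Let V be a finite-dimensional ℚ-vector space. Then R(V) is spanned by the image of ⋆; that is, the ℚ-linear span of the set { ⋆(x₁, x₂, x₃, x₄, x₅) : x₁,…,x₅ ∈ V } equals R(V). -/

import Mathlib

/-!
Common constructions: for a `ℚ`-vector space `V`, the symmetric powers
`P²V, P³V, P⁴V, P⁵V` (as `SqM V`, `CubM V`, `QuarM V`, `QuinM V`), built as iterated
quotients of tensor products, with the multiplication maps between them; the exterior
square `Λ²W` (as `AltM W`) with the wedge map; and the 5-linear map `⋆` (as `star5`).
-/

open TensorProduct

noncomputable section

variable (V W : Type) [AddCommGroup V] [Module ℚ V] [AddCommGroup W] [Module ℚ W]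

/-- The relations defining the symmetric square `P²V` as a quotient of `V ⊗ V`. -/
def sqRel : Submodule ℚ (V ⊗[ℚ] V) :=
  Submodule.span ℚ {z | ∃ x y : V, z = x ⊗ₜ[ℚ] y - y ⊗ₜ[ℚ] x}

/-- The symmetric square `P²V`. -/
abbrev SqM : Type := (V ⊗[ℚ] V) ⧸ sqRel V

/-- The product `V × V → P²V`, `(x, y) ↦ xy`. -/
def sqm : V →ₗ[ℚ] V →ₗ[ℚ] SqM V :=
  (TensorProduct.mk ℚ V V).compr₂ (sqRel V).mkQ

/-- The relations presenting the symmetric cube `P³V` as a quotient of `V ⊗ P²V`. -/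
def cubRel : Submodule ℚ (V ⊗[ℚ] SqM V) :=
  Submodule.span ℚ {z | ∃ x y w : V, z = x ⊗ₜ[ℚ] sqm V y w - y ⊗ₜ[ℚ] sqm V x w}

/-- The symmetric cube `P³V`. -/
abbrev CubM : Type := (V ⊗[ℚ] SqM V) ⧸ cubRel V

/-- The product `V × P²V → P³V`. -/
def mulC : V →ₗ[ℚ] SqM V →ₗ[ℚ] CubM V :=
  (TensorProduct.mk ℚ V (SqM V)).compr₂ (cubRel V).mkQ

/-- The relations presenting `P⁴V` as a quotient of `V ⊗ P³V`. -/
def quarRel : Submodule ℚ (V ⊗[ℚ] CubM V) :=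
  Submodule.span ℚ {z | ∃ (x y : V) (u : SqM V), z = x ⊗ₜ[ℚ] mulC V y u - y ⊗ₜ[ℚ] mulC V x u}

/-- The symmetric fourth power `P⁴V`. -/
abbrev QuarM : Type := (V ⊗[ℚ] CubM V) ⧸ quarRel V

/-- The product `V × P³V → P⁴V`. -/
def mulQ : V →ₗ[ℚ] CubM V →ₗ[ℚ] QuarM V :=
  (TensorProduct.mk ℚ V (CubM V)).compr₂ (quarRel V).mkQ

/-- The relations presenting `P⁵V` as a quotient of `V ⊗ P⁴V`. -/
def quinRel : Submodule ℚ (V ⊗[ℚ] QuarM V) :=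
  Submodule.span ℚ {z | ∃ (x y : V) (c : CubM V), z = x ⊗ₜ[ℚ] mulQ V y c - y ⊗ₜ[ℚ] mulQ V x c}

/-- The symmetric fifth power `P⁵V`. -/
abbrev QuinM : Type := (V ⊗[ℚ] QuarM V) ⧸ quinRel V

/-- The product `V × P⁴V → P⁵V`. -/
def mulQn : V →ₗ[ℚ] QuarM V →ₗ[ℚ] QuinM V :=
  (TensorProduct.mk ℚ V (QuarM V)).compr₂ (quinRel V).mkQ

/-- The relations defining the exterior square `Λ²W` as a quotient of `W ⊗ W`. -/
def altRel2 : Submodule ℚ (W ⊗[ℚ] W) :=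
  Submodule.span ℚ {z | ∃ x : W, z = x ⊗ₜ[ℚ] x}

/-- The exterior square `Λ²W`. -/
abbrev AltM : Type := (W ⊗[ℚ] W) ⧸ altRel2 W

/-- The wedge product `W × W → Λ²W`. -/
def wdg : W →ₗ[ℚ] W →ₗ[ℚ] AltM W :=
  (TensorProduct.mk ℚ W W).compr₂ (altRel2 W).mkQ

/-- The element `⋆(x₁,…,x₅) = Σ_{i ∈ ℤ/5} xᵢ ⊗ (x_{i+1}x_{i+2} ∧ x_{i+3}x_{i+4})`
of `V ⊗ Λ²(P²V)`. -/
def star5 (x₁ x₂ x₃ x₄ x₅ : V) : V ⊗[ℚ] AltM (SqM V) :=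
    x₁ ⊗ₜ[ℚ] wdg (SqM V) (sqm V x₂ x₃) (sqm V x₄ x₅)
  + x₂ ⊗ₜ[ℚ] wdg (SqM V) (sqm V x₃ x₄) (sqm V x₅ x₁)
  + x₃ ⊗ₜ[ℚ] wdg (SqM V) (sqm V x₄ x₅) (sqm V x₁ x₂)
  + x₄ ⊗ₜ[ℚ] wdg (SqM V) (sqm V x₅ x₁) (sqm V x₂ x₃)
  + x₅ ⊗ₜ[ℚ] wdg (SqM V) (sqm V x₁ x₂) (sqm V x₃ x₄)

/-!
Let `s : P³V ⊗ P²V → V ⊗ Λ²(P²V)` (`comulWedge`) be induced by the comultiplication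
`pqr ↦ p ⊗ qr + q ⊗ rp + r ⊗ pq` and put `T = s ∘ m`. On a generator `g = x ⊗ (ab ∧ cd)` one
computes `T g = 2g + a ⊗ (bx ∧ cd) + b ⊗ (xa ∧ cd) + c ⊗ (ab ∧ dx) + d ⊗ (ab ∧ xc)`, and from
this that `(T - 2)(T - 5) g` is an integral combination of values of `⋆`. Since `T` vanishes on
`ker m`, the operator `(T - 2)(T - 5)` acts there as multiplication by `10`, so `ker m` lies in
the span of `⋆`; conversely `m ∘ ⋆ = 0` by direct expansion.
-/

section Symmetric

variable {V W}

lemma sqm_comm (x y : V) : sqm V x y = sqm V y x :=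
  (Submodule.Quotient.eq _).2 (Submodule.subset_span ⟨x, y, rfl⟩)

lemma mulC_sqm_comm (p q r : V) : mulC V p (sqm V q r) = mulC V q (sqm V p r) :=
  (Submodule.Quotient.eq _).2 (Submodule.subset_span ⟨p, q, r, rfl⟩)

lemma wdg_self (u : W) : wdg W u u = 0 :=
  (Submodule.Quotient.mk_eq_zero _).2 (Submodule.subset_span ⟨u, rfl⟩)

lemma wdg_anticomm (u v : W) : wdg W u v = -wdg W v u := by
  have h := wdg_self (u + v)
  simp only [map_add, LinearMap.add_apply, wdg_self, zero_add, add_zero] at h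
  exact eq_neg_of_add_eq_zero_right h

lemma ext_tmul_wdg_sqm {M : Type*} [AddCommGroup M] [Module ℚ M]
    {f g : V ⊗[ℚ] AltM (SqM V) →ₗ[ℚ] M}
    (h : ∀ x a b c d : V, f (x ⊗ₜ wdg (SqM V) (sqm V a b) (sqm V c d))
      = g (x ⊗ₜ wdg (SqM V) (sqm V a b) (sqm V c d))) : f = g := by
  ext x a b c d
  exact h x a b c d

variable (V) in
def sqComul : SqM V →ₗ[ℚ] V ⊗[ℚ] V :=
  (sqRel V).liftQ (LinearMap.id + (TensorProduct.comm ℚ V V).toLinearMap) <| by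
    rw [sqRel, Submodule.span_le]
    rintro _ ⟨x, y, rfl⟩
    simp

lemma sqComul_sqm (x y : V) : sqComul V (sqm V x y) = x ⊗ₜ y + y ⊗ₜ x := rfl

variable (V) in
/-- `pqr ↦ p ⊗ qr + q ⊗ rp + r ⊗ pq`, where `q ⊗ rp + r ⊗ pq = (id ⊗ (· * p)) (sqComul qr)`. -/
def cubComul : CubM V →ₗ[ℚ] V ⊗[ℚ] SqM V :=
  (cubRel V).liftQ (LinearMap.id + TensorProduct.lift
    ((LinearMap.llcomp ℚ (SqM V) (V ⊗[ℚ] V) (V ⊗[ℚ] SqM V)).flip (sqComul V) ∘ₗ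
      LinearMap.lTensorHom V ∘ₗ (sqm V).flip)) <| by
    rw [cubRel, Submodule.span_le]
    rintro _ ⟨x, y, w, rfl⟩
    simp [sqComul_sqm, sqm_comm x, sqm_comm y w]

lemma cubComul_mulC_sqm (p q r : V) :
    cubComul V (mulC V p (sqm V q r)) = p ⊗ₜ sqm V q r + q ⊗ₜ sqm V r p + r ⊗ₜ sqm V p q := by
  rw [cubComul, mulC, LinearMap.compr₂_apply, Submodule.mkQ_apply, Submodule.liftQ_apply]
  simp [sqComul_sqm, sqm_comm q p, add_assoc]

variable (V) in
def comulWedge : CubM V ⊗[ℚ] SqM V →ₗ[ℚ] V ⊗[ℚ] AltM (SqM V) :=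
  (altRel2 (SqM V)).mkQ.lTensor V ∘ₗ (TensorProduct.assoc ℚ V (SqM V) (SqM V)).toLinearMap ∘ₗ
    (cubComul V).rTensor (SqM V)

lemma comulWedge_mulC_sqm_tmul (p q r : V) (u : SqM V) :
    comulWedge V (mulC V p (sqm V q r) ⊗ₜ u)
      = p ⊗ₜ wdg (SqM V) (sqm V q r) u + q ⊗ₜ wdg (SqM V) (sqm V r p) u
        + r ⊗ₜ wdg (SqM V) (sqm V p q) u := by
  simp only [comulWedge, LinearMap.comp_apply, LinearMap.rTensor_tmul, cubComul_mulC_sqm,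
    TensorProduct.add_tmul, map_add, LinearEquiv.coe_coe, TensorProduct.assoc_tmul,
    LinearMap.lTensor_tmul]
  rfl

end Symmetric

section WedgeMul

variable {V} {m : V ⊗[ℚ] AltM (SqM V) →ₗ[ℚ] CubM V ⊗[ℚ] SqM V}
  (hm : ∀ (q : V) (u v : SqM V),
    m (q ⊗ₜ[ℚ] wdg (SqM V) u v) = mulC V q u ⊗ₜ[ℚ] v - mulC V q v ⊗ₜ[ℚ] u)
include hm

lemma m_star5_eq_zero (x₁ x₂ x₃ x₄ x₅ : V) : m (star5 V x₁ x₂ x₃ x₄ x₅) = 0 := by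
  simp only [star5, map_add, hm, sqm_comm, mulC_sqm_comm]
  abel

lemma comulWedge_m_tmul_wdg (x a b c d : V) :
    comulWedge V (m (x ⊗ₜ wdg (SqM V) (sqm V a b) (sqm V c d)))
      = (2 : ℚ) • x ⊗ₜ wdg (SqM V) (sqm V a b) (sqm V c d)
        + a ⊗ₜ wdg (SqM V) (sqm V b x) (sqm V c d) + b ⊗ₜ wdg (SqM V) (sqm V x a) (sqm V c d)
        + c ⊗ₜ wdg (SqM V) (sqm V a b) (sqm V d x) + d ⊗ₜ wdg (SqM V) (sqm V a b) (sqm V x c) := by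
  rw [hm, map_sub, comulWedge_mulC_sqm_tmul, comulWedge_mulC_sqm_tmul,
    wdg_anticomm (sqm V c d), wdg_anticomm (sqm V d x), wdg_anticomm (sqm V x c)]
  simp only [TensorProduct.tmul_neg]
  module

lemma comulWedge_m_sub_two_mul_sub_five_tmul_wdg (x a b c d : V) :
    ((comulWedge V ∘ₗ m - 2) * (comulWedge V ∘ₗ m - 5)) (x ⊗ₜ wdg (SqM V) (sqm V a b) (sqm V c d))
      = (2 : ℚ) • star5 V x a b c d + (2 : ℚ) • star5 V x a b d c
        - star5 V x a c b d + star5 V x a c d b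
        - star5 V x a d b c + star5 V x a d c b := by
  simp only [Module.End.mul_apply, LinearMap.sub_apply, Module.End.ofNat_apply,
    LinearMap.comp_apply, comulWedge_m_tmul_wdg hm, map_add, map_sub, map_nsmul, map_smul, star5]
  simp only [sqm_comm]
  -- orient every wedge so that its factor containing `x` comes first
  simp only [wdg_anticomm (sqm V a b) (sqm V x _), wdg_anticomm (sqm V a c) (sqm V x _),
    wdg_anticomm (sqm V a d) (sqm V x _), wdg_anticomm (sqm V b c) (sqm V x _),
    wdg_anticomm (sqm V b d) (sqm V x _), wdg_anticomm (sqm V c d) (sqm V x _),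
    TensorProduct.tmul_neg]
  module

lemma range_comulWedge_m_sub_two_mul_sub_five_le :
    LinearMap.range ((comulWedge V ∘ₗ m - 2) * (comulWedge V ∘ₗ m - 5)) ≤
      Submodule.span ℚ {w | ∃ x₁ x₂ x₃ x₄ x₅ : V, w = star5 V x₁ x₂ x₃ x₄ x₅} := by
  set N := Submodule.span ℚ {w | ∃ x₁ x₂ x₃ x₄ x₅ : V, w = star5 V x₁ x₂ x₃ x₄ x₅}
  have hstar (y₁ y₂ y₃ y₄ y₅ : V) : star5 V y₁ y₂ y₃ y₄ y₅ ∈ N :=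
    Submodule.subset_span ⟨y₁, y₂, y₃, y₄, y₅, rfl⟩
  rw [← N.ker_mkQ, LinearMap.range_le_ker_iff]
  refine ext_tmul_wdg_sqm fun x a b c d => ?_
  rw [LinearMap.comp_apply, comulWedge_m_sub_two_mul_sub_five_tmul_wdg hm, LinearMap.zero_apply,
    Submodule.mkQ_apply, Submodule.Quotient.mk_eq_zero]
  exact N.add_mem (N.sub_mem (N.add_mem (N.sub_mem (N.add_mem (N.smul_mem _ (hstar x a b c d))
    (N.smul_mem _ (hstar x a b d c))) (hstar x a c b d)) (hstar x a c d b)) (hstar x a d b c))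
    (hstar x a d c b)

end WedgeMul

theorem span_star5_eq_ker_m
    (m : (V ⊗[ℚ] AltM (SqM V)) →ₗ[ℚ] (CubM V ⊗[ℚ] SqM V))
    (hm : ∀ (q : V) (u v : SqM V),
      m (q ⊗ₜ[ℚ] wdg (SqM V) u v) = mulC V q u ⊗ₜ[ℚ] v - mulC V q v ⊗ₜ[ℚ] u) :
    Submodule.span ℚ
        {w : V ⊗[ℚ] AltM (SqM V) | ∃ x₁ x₂ x₃ x₄ x₅ : V, w = star5 V x₁ x₂ x₃ x₄ x₅}
      = LinearMap.ker m := by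
  refine le_antisymm (Submodule.span_le.2 ?_) fun z hz => ?_
  · rintro _ ⟨x₁, x₂, x₃, x₄, x₅, rfl⟩
    exact m_star5_eq_zero hm x₁ x₂ x₃ x₄ x₅
  · have h10 : ((comulWedge V ∘ₗ m - 2) * (comulWedge V ∘ₗ m - 5)) z = (10 : ℚ) • z := by
      simp only [Module.End.mul_apply, LinearMap.sub_apply, Module.End.ofNat_apply,
        LinearMap.comp_apply, LinearMap.mem_ker.1 hz, map_zero, map_nsmul, map_sub]
      module
    have h10_mem := Submodule.smul_mem _ (10 : ℚ)⁻¹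
      (range_comulWedge_m_sub_two_mul_sub_five_le hm (LinearMap.mem_range_self _ z))
    rwa [h10, inv_smul_smul₀ (by norm_num)] at h10_mem

end
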